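/- Let $(\tau_i)_{i\ge1}$ be i.i.d. nonnegative random variables with finite mean $m=\mathbf{E}[\tau_1]$ and tail $\mathbf{P}(\tau_1>t)$ regularly varying at infinity with index $-\theta<-1$. Fix $\delta>0$ and $\gamma>1$ with $\gamma\delta m<1$. Then there exists $C>0$ such that for all $t$ large and all $x\in[0,\delta t]$, $\mathbf{P}\big(\sum_{i=1}^{[x]+1}\tau_i>t\big)\le C\,(x+1)\,\mathbf{P}\big(\tau_1>(1-\gamma\delta m)t\big)$. -/

import Mathlib

/-!
Put `S = τ₀ + ⋯ + τₙ₋₁` with `n ≤ δ t + 1`, `b = δ m < 1` and `c = 1 - γ δ m > 0`. If no `τᵢ`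
exceeds `β t` and fewer than `k` of them exceed `u = t ^ α`, then `S` is at most
`(k - 1) β t` plus the sum of the `τᵢ` truncated at `u`; so with `β = (1 - b) / 2k`, on
`{S > t}` either some `τᵢ > β t`, or `k` of them exceed `u`, or the truncated sum is at least
`(1 + b) t / 2`. The first event costs `n P(τ > β t) = O((x + 1) P(τ > c t))` by regular
variation. Potter's bounds `s^(-θ-1) ≤ P(τ > s) ≤ s^(-r)` (`1 < r < θ`), which follow from
`P(τ > 2s) / P(τ > s) → 2^(-θ)` by iterating over dyadic scales, make the second event cost
`nᵏ P(τ > t^α)ᵏ ≤ (δ t + t)ᵏ t^(-α r k) = o(P(τ > c t))` once `α r > 1` and `k` is large.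
The Chernoff bound at `λ ≍ t^(-α)`, where `exp (λ min(τ, u)) ≤ 1 + (1 + λu) λ τ`, makes the
third event cost `exp (-const · t^(1-α))`, again `o(P(τ > c t))`.
-/

open Filter MeasureTheory Set Real ProbabilityTheory Topology
open scoped Finset

lemma exp_le_one_add_mul_of_le {z ε : ℝ} (hz : 0 ≤ z) (hzε : z ≤ ε) (hε : ε ≤ 1) :
    exp z ≤ 1 + (1 + ε) * z := by
  have h := (abs_le.mp (abs_exp_sub_one_sub_id_le (x := z)
    (abs_le.mpr ⟨by linarith, by linarith⟩))).2
  nlinarith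

lemma le_of_map_two_mul_le_of_le_on_Icc {h : ℝ → ℝ} {T K : ℝ} (hT : 0 < T)
    (hdouble : ∀ s ≥ T, h (2 * s) ≤ h s) (hbase : ∀ s ∈ Icc T (2 * T), h s ≤ K) :
    ∀ s ≥ T, h s ≤ K := by
  have hdyadic : ∀ n : ℕ, ∀ s ∈ Icc T (2 ^ (n + 1) * T), h s ≤ K := by
    intro n
    induction n with
    | zero => simpa using hbase
    | succ n ih =>
      rintro s ⟨hTs, hs⟩
      rcases le_or_gt s (2 * T) with hs2 | hs2
      · exact hbase s ⟨hTs, hs2⟩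
      · calc h s = h (2 * (s / 2)) := by ring_nf
          _ ≤ h (s / 2) := hdouble _ (by linarith)
          _ ≤ K := ih _ ⟨by linarith, by rw [pow_succ] at hs; linarith⟩
  intro s hs
  obtain ⟨n, hn⟩ := pow_unbounded_of_one_lt (s / T) one_lt_two
  have : (2 : ℝ) ^ n ≤ 2 ^ (n + 1) := pow_le_pow_right₀ one_le_two n.le_succ
  exact hdyadic n s ⟨hs, by rw [div_lt_iff₀ hT] at hn; nlinarith⟩

lemma eventually_le_const_mul_of_tendsto_div {l : Filter ℝ} {f g : ℝ → ℝ} {L D : ℝ}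
    (hf : ∀ t, 0 < f t) (h : Tendsto (fun t => g t / f t) l (𝓝 L)) (hLD : L < D) :
    ∀ᶠ t in l, g t ≤ D * f t := by
  filter_upwards [h.eventually_lt_const hLD] with t ht
  exact ((div_lt_iff₀ (hf t)).mp ht).le

lemma eventually_const_mul_le_of_tendsto_div {l : Filter ℝ} {f g : ℝ → ℝ} {L D : ℝ}
    (hf : ∀ t, 0 < f t) (h : Tendsto (fun t => g t / f t) l (𝓝 L)) (hDL : D < L) :
    ∀ᶠ t in l, D * f t ≤ g t := by
  filter_upwards [h.eventually_const_lt hDL] with t ht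
  exact ((lt_div_iff₀ (hf t)).mp ht).le

lemma eventually_mul_rpow_le_mul_rpow (A : ℝ) {B w₁ w₂ : ℝ} (hB : 0 < B) (hw : w₁ < w₂) :
    ∀ᶠ t in atTop, A * t ^ w₁ ≤ B * t ^ w₂ := by
  filter_upwards [(tendsto_rpow_atTop (sub_pos.mpr hw)).eventually_ge_atTop (A / B),
    eventually_gt_atTop 0] with t hAB ht
  calc A * t ^ w₁ ≤ B * t ^ (w₂ - w₁) * t ^ w₁ := by
        gcongr; rwa [div_le_iff₀' hB] at hAB
    _ = B * t ^ w₂ := by rw [mul_assoc, ← rpow_add ht, sub_add_cancel]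

lemma eventually_exp_neg_mul_rpow_le {κ p : ℝ} (hκ : 0 < κ) (hp : 0 < p) (q : ℝ) {K : ℝ}
    (hK : 0 < K) : ∀ᶠ t in atTop, exp (-κ * t ^ p) ≤ K * t ^ (-q) := by
  have hlim := (tendsto_rpow_mul_exp_neg_mul_atTop_nhds_zero (q / p) κ hκ).comp
    (tendsto_rpow_atTop hp)
  filter_upwards [hlim.eventually_lt_const hK, eventually_gt_atTop 0] with t ht ht0
  have hpow : (t ^ p) ^ (q / p) = t ^ q := by
    rw [← rpow_mul ht0.le, mul_div_cancel₀ _ hp.ne']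
  simp only [Function.comp_apply, hpow] at ht
  rw [rpow_neg ht0.le, ← div_eq_mul_inv, le_div_iff₀ (rpow_pos_of_pos ht0 q)]
  linarith

lemma nonneg_of_tendsto_div_two_mul {f : ℝ → ℝ} {θ : ℝ} (hpos : ∀ t, 0 < f t)
    (hanti : Antitone f) (hlim : Tendsto (fun t => f (2 * t) / f t) atTop (𝓝 (2 ^ (-θ)))) :
    0 ≤ θ := by
  by_contra! hθ
  have hle : (2 : ℝ) ^ (-θ) ≤ 1 := le_of_tendsto hlim <| by
    filter_upwards [eventually_ge_atTop 0] with t ht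
    exact (div_le_one (hpos t)).mpr (hanti (by linarith))
  exact hle.not_gt (one_lt_rpow one_lt_two (by linarith))

lemma eventually_le_rpow_neg_of_tendsto_div_two_mul {f : ℝ → ℝ} {θ ρ : ℝ}
    (hpos : ∀ t, 0 < f t) (hanti : Antitone f)
    (hlim : Tendsto (fun t => f (2 * t) / f t) atTop (𝓝 (2 ^ (-θ)))) (hρ : 0 ≤ ρ)
    (hρθ : ρ < θ) : ∀ᶠ s in atTop, f s ≤ s ^ (-ρ) := by
  obtain ⟨ρ', hρρ', hρ'θ⟩ := exists_between hρθ
  obtain ⟨T, hT⟩ := eventually_atTop.mp <| (eventually_le_const_mul_of_tendsto_div hpos hlim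
    (rpow_lt_rpow_of_exponent_lt one_lt_two (by linarith : -θ < -ρ'))).and
    (eventually_gt_atTop 0)
  have hT0 : 0 < T := (hT T le_rfl).2
  have hbound : ∀ s ≥ T, s ^ ρ' * f s ≤ (2 * T) ^ ρ' * f T := by
    refine le_of_map_two_mul_le_of_le_on_Icc hT0 (fun s hs => ?_) (fun s hs => ?_)
    · obtain ⟨hdouble, hs0⟩ := hT s hs
      calc (2 * s) ^ ρ' * f (2 * s) ≤ 2 ^ ρ' * s ^ ρ' * (2 ^ (-ρ') * f s) := by
            rw [mul_rpow zero_le_two hs0.le]; gcongr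
        _ = s ^ ρ' * f s := by rw [rpow_neg zero_le_two]; field_simp
    · exact mul_le_mul (rpow_le_rpow (hT0.le.trans hs.1) hs.2 (by linarith)) (hanti hs.1)
        (hpos s).le (rpow_nonneg (by linarith) _)
  filter_upwards [(tendsto_rpow_atTop (by linarith : 0 < ρ' - ρ)).eventually_ge_atTop
    ((2 * T) ^ ρ' * f T), eventually_ge_atTop T] with s hK hs
  have hs0 : 0 < s := hT0.trans_le hs
  have hmul : f s * s ^ ρ' ≤ s ^ (-ρ) * s ^ ρ' := by
    rw [← rpow_add hs0, neg_add_eq_sub]; linarith [hbound s hs]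
  exact le_of_mul_le_mul_right hmul (rpow_pos_of_pos hs0 _)

lemma eventually_rpow_neg_le_of_tendsto_div_two_mul {f : ℝ → ℝ} {θ q : ℝ}
    (hpos : ∀ t, 0 < f t) (hanti : Antitone f)
    (hlim : Tendsto (fun t => f (2 * t) / f t) atTop (𝓝 (2 ^ (-θ)))) (hθq : θ < q) :
    ∀ᶠ s in atTop, s ^ (-q) ≤ f s := by
  have hθ := nonneg_of_tendsto_div_two_mul hpos hanti hlim
  obtain ⟨q', hθq', hq'q⟩ := exists_between hθq
  obtain ⟨T, hT⟩ := eventually_atTop.mp <| (eventually_const_mul_le_of_tendsto_div hpos hlim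
    (rpow_lt_rpow_of_exponent_lt one_lt_two (by linarith : -q' < -θ))).and
    (eventually_gt_atTop 0)
  have hT0 : 0 < T := (hT T le_rfl).2
  have hbound : ∀ s ≥ T, T ^ q' * f (2 * T) ≤ s ^ q' * f s := by
    have := le_of_map_two_mul_le_of_le_on_Icc (h := fun s => -(s ^ q' * f s))
      (K := -(T ^ q' * f (2 * T))) hT0 (fun s hs => ?_) (fun s hs => ?_)
    · exact fun s hs => neg_le_neg_iff.mp (this s hs)
    · obtain ⟨hdouble, hs0⟩ := hT s hs
      refine neg_le_neg ?_
      calc s ^ q' * f s = 2 ^ q' * s ^ q' * (2 ^ (-q') * f s) := by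
            rw [rpow_neg zero_le_two]; field_simp
        _ ≤ (2 * s) ^ q' * f (2 * s) := by
            rw [mul_rpow zero_le_two hs0.le]; gcongr
    · exact neg_le_neg (mul_le_mul (rpow_le_rpow hT0.le hs.1 (by linarith)) (hanti hs.2)
        (hpos _).le (rpow_nonneg (hT0.le.trans hs.1) _))
  filter_upwards [(tendsto_rpow_neg_atTop (by linarith : 0 < q - q')).eventually_le_const
    (mul_pos (rpow_pos_of_pos hT0 q') (hpos _)), eventually_ge_atTop T] with s hK hs
  have hs0 : 0 < s := hT0.trans_le hs
  have hmul : s ^ (-q) * s ^ q' ≤ f s * s ^ q' := by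
    rw [← rpow_add hs0, show -q + q' = -(q - q') by ring]; linarith [hbound s hs]
  exact le_of_mul_le_mul_right hmul (rpow_pos_of_pos hs0 _)

lemma exists_eventually_choose_mul_pow_le {f : ℝ → ℝ} {θ c : ℝ} (hpos : ∀ t, 0 < f t)
    (hanti : Antitone f) (hlim : Tendsto (fun t => f (2 * t) / f t) atTop (𝓝 (2 ^ (-θ))))
    (hθ : 1 < θ) (hc : 0 < c) (K : ℝ) :
    ∃ α : ℝ, 0 < α ∧ α < 1 ∧ ∃ k : ℕ, 0 < k ∧ ∀ᶠ t in atTop, ∀ n : ℕ, (n : ℝ) ≤ K * t →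
      n.choose k * f (t ^ α) ^ k ≤ f (c * t) := by
  obtain ⟨r, hr1, hrθ⟩ := exists_between hθ
  obtain ⟨α, hαr, hα1⟩ := exists_between (inv_lt_one_of_one_lt₀ hr1)
  have hα0 : 0 < α := (inv_pos.mpr (by linarith)).trans hαr
  have hαr1 : 0 < α * r - 1 := by
    have := (inv_lt_iff_one_lt_mul₀' (by linarith : 0 < r)).mp hαr; linarith
  -- With `f (t^α) ≤ t^(-α r)`, this `k` makes `(K t)^k t^(-α r k)` smaller than the lower
  -- Potter bound `(c t)^(-(θ + 1)) ≤ f (c t)`.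
  obtain ⟨k, hk⟩ := exists_nat_gt ((θ + 1) / (α * r - 1))
  have hkθ : θ + 1 < k * (α * r - 1) := (div_lt_iff₀ hαr1).mp hk
  have hk0 : (0 : ℝ) < k := lt_of_le_of_lt (by positivity) hk
  refine ⟨α, hα0, hα1, k, by exact_mod_cast hk0, ?_⟩
  filter_upwards [(tendsto_rpow_atTop hα0).eventually
      (eventually_le_rpow_neg_of_tendsto_div_two_mul hpos hanti hlim (by linarith) hrθ),
    (tendsto_id.const_mul_atTop hc).eventually
      (eventually_rpow_neg_le_of_tendsto_div_two_mul hpos hanti hlim (lt_add_one θ)),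
    eventually_mul_rpow_le_mul_rpow (K ^ k) (rpow_pos_of_pos hc (-(θ + 1)))
      (by nlinarith : (1 - α * r) * k < -(θ + 1)),
    eventually_gt_atTop 0] with t hupper hlower hpow ht n hn
  have hchoose : (n.choose k : ℝ) ≤ (K * t) ^ k := by
    calc (n.choose k : ℝ) ≤ (n : ℝ) ^ k := by exact_mod_cast n.choose_le_pow k
      _ ≤ (K * t) ^ k := pow_le_pow_left₀ (Nat.cast_nonneg n) hn k
  have hrpow : t * (t ^ α) ^ (-r) = t ^ (1 - α * r) := by
    rw [← rpow_mul ht.le, sub_eq_add_neg, rpow_add ht, rpow_one, neg_mul_eq_mul_neg]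
  calc n.choose k * f (t ^ α) ^ k ≤ (K * t) ^ k * ((t ^ α) ^ (-r)) ^ k :=
        mul_le_mul hchoose (pow_le_pow_left₀ (hpos _).le hupper k) (pow_nonneg (hpos _).le k)
          (pow_nonneg ((Nat.cast_nonneg n).trans hn) k)
    _ = K ^ k * t ^ ((1 - α * r) * k) := by
        rw [← mul_pow, mul_assoc, hrpow, mul_pow, rpow_mul_natCast ht.le]
    _ ≤ c ^ (-(θ + 1)) * t ^ (-(θ + 1)) := hpow
    _ = (c * t) ^ (-(θ + 1)) := (mul_rpow hc.le ht.le).symm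
    _ ≤ f (c * t) := hlower

lemma Finset.sum_le_mul_add_sum_min {ι : Type*} (s : Finset ι) (a : ι → ℝ) {u M : ℝ} {k : ℕ}
    (hu : 0 ≤ u) (hM : 0 ≤ M) (haM : ∀ i ∈ s, a i ≤ M) (hk : #{i ∈ s | u < a i} < k) :
    ∑ i ∈ s, a i ≤ (k - 1) * M + ∑ i ∈ s, min (a i) u := by
  have hcard : (#{i ∈ s | u < a i} : ℝ) ≤ k - 1 := by
    have : (#{i ∈ s | u < a i} : ℝ) + 1 ≤ k := by exact_mod_cast Nat.succ_le_of_lt hk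
    linarith
  have hexcess : ∑ i ∈ s, (a i - min (a i) u) = ∑ i ∈ s with u < a i, (a i - min (a i) u) :=
    (Finset.sum_filter_of_ne fun i _ hi => by
      by_contra h; exact hi (by rw [min_eq_left (not_lt.mp h), sub_self])).symm
  have hle : ∑ i ∈ s with u < a i, (a i - min (a i) u) ≤ #{i ∈ s | u < a i} • M :=
    Finset.sum_le_card_nsmul _ _ _ fun i hi => by
      rw [min_eq_right (Finset.mem_filter.mp hi).2.le]
      linarith [haM i (Finset.mem_filter.mp hi).1]
  rw [nsmul_eq_mul] at hle
  have := mul_le_mul_of_nonneg_right hcard hM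
  rw [Finset.sum_sub_distrib] at hexcess
  linarith

section Probability

variable {Ω : Type*} [MeasurableSpace Ω] {μ : Measure Ω}

def tail (μ : Measure Ω) (X : Ω → ℝ) (s : ℝ) : ℝ := μ.real {ω | s < X ω}

lemma tail_antitone [IsFiniteMeasure μ] (X : Ω → ℝ) : Antitone (tail μ X) :=
  fun _ _ h => measureReal_mono fun _ hω => lt_of_le_of_lt h hω

lemma ProbabilityTheory.IdentDistrib.tail_eq {X Y : Ω → ℝ} (h : IdentDistrib X Y μ μ) :
    tail μ X = tail μ Y := by
  ext s
  simp only [tail, measureReal_def]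
  exact congrArg ENNReal.toReal (h.measure_mem_eq (measurableSet_Ioi (a := s)))

variable {τ : ℕ → Ω → ℝ}

lemma measureReal_exists_lt_le (hid : ∀ i, IdentDistrib (τ i) (τ 0) μ μ) (n : ℕ) (s : ℝ) :
    μ.real (⋃ i ∈ Finset.range n, {ω | s < τ i ω}) ≤ n * tail μ (τ 0) s :=
  calc μ.real (⋃ i ∈ Finset.range n, {ω | s < τ i ω})
      ≤ ∑ i ∈ Finset.range n, tail μ (τ i) s := measureReal_biUnion_finset_le _ _
    _ = n * tail μ (τ 0) s := by simp [(hid _).tail_eq]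

lemma measureReal_le_card_lt_le [IsFiniteMeasure μ] (hindep : iIndepFun τ μ)
    (hid : ∀ i, IdentDistrib (τ i) (τ 0) μ μ) (n k : ℕ) (u : ℝ) :
    μ.real {ω | k ≤ #{i ∈ Finset.range n | u < τ i ω}} ≤ n.choose k * tail μ (τ 0) u ^ k := by
  have hsub : {ω | k ≤ #{i ∈ Finset.range n | u < τ i ω}} ⊆
      ⋃ s ∈ (Finset.range n).powersetCard k, ⋂ i ∈ s, {ω | u < τ i ω} := by
    intro ω hω
    obtain ⟨s, hs, hcard⟩ := Finset.exists_subset_card_eq hω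
    refine mem_iUnion₂.mpr ⟨s, Finset.mem_powersetCard.mpr ⟨hs.trans (Finset.filter_subset _ _),
      hcard⟩, mem_iInter₂.mpr fun i hi => (Finset.mem_filter.mp (hs hi)).2⟩
  have hinter : ∀ s ∈ (Finset.range n).powersetCard k,
      μ.real (⋂ i ∈ s, {ω | u < τ i ω}) = tail μ (τ 0) u ^ k := by
    intro s hs
    rw [measureReal_def, hindep.meas_biInter (s := fun i => {ω | u < τ i ω})
        fun i _ => ⟨Ioi u, measurableSet_Ioi, rfl⟩, ENNReal.toReal_prod, ← (Finset.mem_powersetCard.mp hs).2, ← Finset.prod_const]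
    exact Finset.prod_congr rfl fun i _ => congrFun (hid i).tail_eq u
  calc μ.real {ω | k ≤ #{i ∈ Finset.range n | u < τ i ω}}
      ≤ μ.real (⋃ s ∈ (Finset.range n).powersetCard k, ⋂ i ∈ s, {ω | u < τ i ω}) :=
        measureReal_mono hsub (measure_ne_top _ _)
    _ ≤ ∑ s ∈ (Finset.range n).powersetCard k, μ.real (⋂ i ∈ s, {ω | u < τ i ω}) :=
        measureReal_biUnion_finset_le _ _
    _ = n.choose k * tail μ (τ 0) u ^ k := by
        rw [Finset.sum_congr rfl hinter, Finset.sum_const, Finset.card_powersetCard,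
          Finset.card_range, nsmul_eq_mul]

lemma mgf_min_le [IsProbabilityMeasure μ] {X : Ω → ℝ} (hX : 0 ≤ᵐ[μ] X) (hint : Integrable X μ)
    {u s : ℝ} (hu : 0 ≤ u) (hs : 0 ≤ s) (hsu : s * u ≤ 1) :
    mgf (fun ω => min (X ω) u) μ s ≤ exp (s * (1 + s * u) * μ[X]) := by
  have hmeas : AEMeasurable (fun ω => min (X ω) u) μ :=
    hint.aemeasurable.min aemeasurable_const
  have hint_exp : Integrable (fun ω => exp (s * min (X ω) u)) μ :=
    Integrable.mono' (integrable_const (exp (s * u)))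
      (hmeas.const_mul s).exp.aestronglyMeasurable (ae_of_all _ fun ω => by
        rw [norm_eq_abs, abs_exp]; gcongr; exact min_le_right _ _)
  calc mgf (fun ω => min (X ω) u) μ s
      ≤ ∫ ω, (1 + s * (1 + s * u) * X ω) ∂μ := by
        refine integral_mono_ae hint_exp ((integrable_const 1).add (hint.const_mul _)) ?_
        filter_upwards [hX] with ω hω
        have hmin : 0 ≤ min (X ω) u := le_min hω hu
        calc exp (s * min (X ω) u) ≤ 1 + (1 + s * u) * (s * min (X ω) u) :=
              exp_le_one_add_mul_of_le (by positivity) (by gcongr; exact min_le_right _ _) hsu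
          _ = 1 + s * (1 + s * u) * min (X ω) u := by ring
          _ ≤ 1 + s * (1 + s * u) * X ω := by gcongr; exact min_le_left _ _
    _ = 1 + s * (1 + s * u) * μ[X] := by
        rw [integral_add (integrable_const 1) (hint.const_mul _), integral_const_mul]; simp
    _ ≤ exp (s * (1 + s * u) * μ[X]) := by linarith [add_one_le_exp (s * (1 + s * u) * μ[X])]

lemma measureReal_le_sum_min_le [IsProbabilityMeasure μ] (hindep : iIndepFun τ μ)
    (hid : ∀ i, IdentDistrib (τ i) (τ 0) μ μ) (hnonneg : 0 ≤ᵐ[μ] τ 0)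
    (hint : Integrable (τ 0) μ) (n : ℕ) (y : ℝ) {u s : ℝ} (hu : 0 ≤ u) (hs : 0 ≤ s)
    (hsu : s * u ≤ 1) :
    μ.real {ω | y ≤ ∑ i ∈ Finset.range n, min (τ i ω) u} ≤
      exp (-s * y + n * (s * (1 + s * u) * μ[τ 0])) := by
  set X : ℕ → Ω → ℝ := fun i ω => min (τ i ω) u
  have hXmeas : ∀ i, AEMeasurable (X i) μ :=
    fun i => (hid i).aemeasurable_fst.min aemeasurable_const
  have hXindep : iIndepFun X μ :=
    hindep.comp (fun _ z => min z u) fun _ => measurable_id.min measurable_const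
  have hXid : ∀ i, IdentDistrib (X i) (X 0) μ μ :=
    fun i => (hid i).comp (measurable_id.min measurable_const)
  set W := ∑ i ∈ Finset.range n, X i
  have hW : ∀ ω, W ω = ∑ i ∈ Finset.range n, min (τ i ω) u := fun ω => by
    simp only [W, X, Finset.sum_apply]
  have hint_exp : Integrable (fun ω => exp (s * W ω)) μ :=
    Integrable.mono' (integrable_const (exp (s * (n * u))))
      ((Finset.aemeasurable_sum _ fun i _ => hXmeas i).const_mul s).exp.aestronglyMeasurable
      (ae_of_all _ fun ω => by
        rw [norm_eq_abs, abs_exp, hW]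
        gcongr
        exact (Finset.sum_le_sum fun i _ => min_le_right _ _).trans_eq (by simp))
  calc μ.real {ω | y ≤ ∑ i ∈ Finset.range n, min (τ i ω) u}
      = μ.real {ω | y ≤ W ω} := by simp_rw [hW]
    _ ≤ exp (-s * y) * mgf W μ s := measure_ge_le_exp_mul_mgf y hs hint_exp
    _ = exp (-s * y) * mgf (X 0) μ s ^ n := by
        rw [hXindep.mgf_sum₀ hXmeas, Finset.prod_eq_pow_card fun i _ =>
          mgf_congr_of_identDistrib _ _ (hXid i) s, Finset.card_range]
    _ ≤ exp (-s * y) * exp (s * (1 + s * u) * μ[τ 0]) ^ n := by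
        gcongr
        · exact mgf_nonneg
        · exact mgf_min_le hnonneg hint hu hs hsu
    _ = exp (-s * y + n * (s * (1 + s * u) * μ[τ 0])) := by rw [← exp_nat_mul, ← exp_add]

lemma measureReal_lt_sum_le [IsFiniteMeasure μ] (hindep : iIndepFun τ μ)
    (hid : ∀ i, IdentDistrib (τ i) (τ 0) μ μ) (n k : ℕ) {t M u y : ℝ} (hM : 0 ≤ M)
    (hu : 0 ≤ u) (hy : (k - 1) * M + y ≤ t) :
    μ.real {ω | t < ∑ i ∈ Finset.range n, τ i ω} ≤
      n * tail μ (τ 0) M + n.choose k * tail μ (τ 0) u ^ k +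
        μ.real {ω | y ≤ ∑ i ∈ Finset.range n, min (τ i ω) u} := by
  set A := ⋃ i ∈ Finset.range n, {ω | M < τ i ω}
  set B := {ω | k ≤ #{i ∈ Finset.range n | u < τ i ω}}
  set C := {ω | y ≤ ∑ i ∈ Finset.range n, min (τ i ω) u}
  have hsub : {ω | t < ∑ i ∈ Finset.range n, τ i ω} ⊆ A ∪ B ∪ C := by
    intro ω hω
    by_cases hA : ω ∈ A
    · exact Or.inl (Or.inl hA)
    by_cases hB : ω ∈ B
    · exact Or.inl (Or.inr hB)
    refine Or.inr ?_
    simp only [A, B, C, mem_iUnion₂, mem_ofPred_eq, not_exists, not_lt, not_le] at hA hB hω ⊢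
    linarith [Finset.sum_le_mul_add_sum_min _ _ hu hM hA hB]
  calc μ.real {ω | t < ∑ i ∈ Finset.range n, τ i ω}
      ≤ μ.real (A ∪ B ∪ C) := measureReal_mono hsub (measure_ne_top _ _)
    _ ≤ μ.real A + μ.real B + μ.real C :=
        (measureReal_union_le _ _).trans (by gcongr; exact measureReal_union_le _ _)
    _ ≤ _ := by
        gcongr
        exacts [measureReal_exists_lt_le hid n M, measureReal_le_card_lt_le hindep hid n k u]

lemma eventually_measureReal_le_sum_min_le [IsProbabilityMeasure μ] (hindep : iIndepFun τ μ)
    (hid : ∀ i, IdentDistrib (τ i) (τ 0) μ μ) (hnonneg : 0 ≤ᵐ[μ] τ 0)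
    (hint : Integrable (τ 0) μ) {δ α c : ℝ} (hδ : 0 ≤ δ) (hb : δ * μ[τ 0] < 1) (hα0 : 0 ≤ α)
    (hα1 : α < 1) (hc : 0 < c) (q : ℝ) :
    ∀ᶠ t in atTop, ∀ n : ℕ, (n : ℝ) ≤ δ * t + 1 →
      μ.real {ω | (1 + δ * μ[τ 0]) / 2 * t ≤ ∑ i ∈ Finset.range n, min (τ i ω) (t ^ α)} ≤
        (c * t) ^ (-q) := by
  set m := μ[τ 0]
  have hm : 0 ≤ m := integral_nonneg_of_ae hnonneg
  set b := δ * m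
  have hb0 : 0 ≤ b := mul_nonneg hδ hm
  -- Chernoff at `λ = ε t^(-α)`, so that `λ u = ε`; `ε = (1 - b) / 4` leaves the margin
  -- `-ε² t^(1-α)` in the exponent.
  set ε := (1 - b) / 4 with hεdef
  have hε0 : 0 < ε := by linarith
  filter_upwards [eventually_exp_neg_mul_rpow_le (mul_pos hε0 hε0) (by linarith : 0 < 1 - α) q
    (by positivity : 0 < exp (-m) * c ^ (-q)), eventually_ge_atTop 1] with t hexp ht n hn
  have ht0 : 0 < t := by linarith
  set Q := t ^ (-α)
  set P := t ^ (1 - α)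
  have hQ0 : 0 ≤ Q := rpow_nonneg ht0.le _
  have hQ1 : Q ≤ 1 := rpow_le_one_of_one_le_of_nonpos ht (by linarith)
  have hP : t * Q = P := by
    simp only [P, Q]; rw [sub_eq_add_neg, rpow_add ht0, rpow_one]
  have hsu : ε * Q * t ^ α = ε := by
    rw [mul_assoc, ← rpow_add ht0]; simp
  have hexponent : -(ε * Q) * ((1 + b) / 2 * t) + n * (ε * Q * (1 + ε) * m) ≤
      m + -(ε * ε) * P := by
    have h1 : n * (ε * Q * (1 + ε) * m) ≤ (δ * t + 1) * (ε * Q * (1 + ε) * m) :=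
      mul_le_mul_of_nonneg_right hn (by positivity)
    have h2 : ε * (1 + ε) * m * Q ≤ m := by
      have : ε * (1 + ε) ≤ 1 := by nlinarith
      nlinarith [mul_le_mul hQ1 this (by positivity) zero_le_one]
    have h3 : ε * ε * P * (b - 1) ≤ 0 := by
      have : 0 ≤ P := rpow_nonneg ht0.le _
      nlinarith [mul_nonneg (mul_nonneg hε0.le hε0.le) this]
    rw [← hP] at h3 ⊢
    linear_combination h1 + h2 + h3
  calc μ.real {ω | (1 + b) / 2 * t ≤ ∑ i ∈ Finset.range n, min (τ i ω) (t ^ α)}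
      ≤ exp (-(ε * Q) * ((1 + b) / 2 * t) + n * (ε * Q * (1 + ε * Q * t ^ α) * m)) :=
        measureReal_le_sum_min_le hindep hid hnonneg hint n _ (rpow_nonneg ht0.le _)
          (by positivity) (by rw [hsu]; linarith)
    _ ≤ exp m * exp (-(ε * ε) * P) := by
        rw [← exp_add, hsu]; exact exp_le_exp.mpr hexponent
    _ ≤ exp m * (exp (-m) * c ^ (-q) * t ^ (-q)) := by gcongr
    _ = (c * t) ^ (-q) := by
        rw [mul_rpow hc.le ht0.le, ← mul_assoc, ← mul_assoc, ← exp_add]; simp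

theorem exists_eventually_measureReal_lt_sum_le [IsProbabilityMeasure μ]
    (hindep : iIndepFun τ μ) (hid : ∀ i, IdentDistrib (τ i) (τ 0) μ μ) (hnonneg : 0 ≤ᵐ[μ] τ 0)
    (hint : Integrable (τ 0) μ) (htailpos : ∀ t, 0 < tail μ (τ 0) t) {θ δ c : ℝ} (hθ : 1 < θ)
    (hRV : ∀ s > (0 : ℝ),
      Tendsto (fun t => tail μ (τ 0) (s * t) / tail μ (τ 0) t) atTop (𝓝 (s ^ (-θ))))
    (hδ : 0 ≤ δ) (hb : δ * μ[τ 0] < 1) (hc : 0 < c) :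
    ∃ C > 0, ∀ᶠ t in atTop, ∀ x ∈ Icc 0 (δ * t),
      μ.real {ω | t < ∑ i ∈ Finset.range (⌊x⌋₊ + 1), τ i ω} ≤
        C * (x + 1) * tail μ (τ 0) (c * t) := by
  set f := tail μ (τ 0)
  set b := δ * μ[τ 0]
  have hanti : Antitone f := tail_antitone (τ 0)
  obtain ⟨α, hα0, hα1, k, hk, hB⟩ :=
    exists_eventually_choose_mul_pow_le htailpos hanti (hRV 2 two_pos) hθ hc (δ + 1)
  set β := (1 - b) / (2 * k)
  have hβk : β * k = (1 - b) / 2 := by simp only [β]; field_simp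
  have hβ : 0 < β := div_pos (by linarith) (by positivity)
  set D := (β / c) ^ (-θ) + 1
  have hA : ∀ᶠ t in atTop, f (β * t) ≤ D * f (c * t) := by
    refine eventually_le_const_mul_of_tendsto_div (fun t => htailpos (c * t))
      (((hRV (β / c) (div_pos hβ hc)).comp (tendsto_id.const_mul_atTop hc)).congr
        fun t => ?_) (lt_add_one _)
    simp only [Function.comp_apply, id]
    congr 2
    field_simp
  refine ⟨D + 2, by positivity, ?_⟩
  filter_upwards [hA, hB, eventually_measureReal_le_sum_min_le hindep hid hnonneg hint hδ hb
      hα0.le hα1 hc (θ + 1), (tendsto_id.const_mul_atTop hc).eventually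
      (eventually_rpow_neg_le_of_tendsto_div_two_mul htailpos hanti (hRV 2 two_pos)
        (lt_add_one θ)), eventually_ge_atTop 1] with t hA hB hC hlower ht
  rintro x ⟨hx0, hxt⟩
  have hn : ((⌊x⌋₊ + 1 : ℕ) : ℝ) ≤ x + 1 := by push_cast; linarith [Nat.floor_le hx0]
  have hy : ((k : ℝ) - 1) * (β * t) + (1 + b) / 2 * t ≤ t := by nlinarith
  have hF : 0 ≤ f (c * t) := (htailpos _).le
  calc μ.real {ω | t < ∑ i ∈ Finset.range (⌊x⌋₊ + 1), τ i ω}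
      ≤ (⌊x⌋₊ + 1 : ℕ) * f (β * t) + (⌊x⌋₊ + 1).choose k * f (t ^ α) ^ k +
          μ.real {ω | (1 + b) / 2 * t ≤
            ∑ i ∈ Finset.range (⌊x⌋₊ + 1), min (τ i ω) (t ^ α)} :=
        measureReal_lt_sum_le hindep hid _ k (by positivity) (by positivity) hy
    _ ≤ (x + 1) * (D * f (c * t)) + f (c * t) + f (c * t) := by
        refine add_le_add (add_le_add ?_ (hB _ (by linarith))) ((hC _ (by linarith)).trans hlower)
        exact mul_le_mul hn hA (htailpos _).le (by linarith)
    _ ≤ (D + 2) * (x + 1) * f (c * t) := by nlinarith [mul_nonneg hx0 hF]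

end Probability

/-- Uniform single-big-jump upper bound for sums of a growing number of i.i.d.
heavy-tailed nonnegative random variables (Proposition 4.1). -/
theorem stmt6
    {Ω : Type*} [MeasurableSpace Ω] (μ : Measure Ω) [IsProbabilityMeasure μ]
    (τ : ℕ → Ω → ℝ) (m θ δ γ : ℝ)
    (hmeas : ∀ i, Measurable (τ i))
    (hindep : ProbabilityTheory.iIndepFun τ μ)
    (hident : ∀ i, Measure.map (τ i) μ = Measure.map (τ 0) μ)
    (hnonneg : ∀ i, ∀ᵐ ω ∂μ, 0 ≤ τ i ω)
    (hint : Integrable (τ 0) μ) (hm : m = ∫ ω, τ 0 ω ∂μ)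
    (htailpos : ∀ t : ℝ, 0 < μ {ω | t < τ 0 ω})
    (hθ : 1 < θ)
    (hRV : ∀ s > (0:ℝ),
      Tendsto (fun t => (μ {ω | s * t < τ 0 ω}).toReal / (μ {ω | t < τ 0 ω}).toReal)
        atTop (nhds (s ^ (-θ))))
    (hδ : 0 < δ) (hγ : 1 < γ) (hγδm : γ * δ * m < 1) :
    ∃ C > (0:ℝ), ∀ᶠ t in atTop, ∀ x ∈ Icc (0:ℝ) (δ * t),
      μ {ω | t < ∑ i ∈ Finset.range (⌊x⌋₊ + 1), τ i ω} ≤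
        ENNReal.ofReal (C * (x + 1)) * μ {ω | (1 - γ * δ * m) * t < τ 0 ω} := by
  have hid : ∀ i, IdentDistrib (τ i) (τ 0) μ μ :=
    fun i => ⟨(hmeas i).aemeasurable, (hmeas 0).aemeasurable, hident i⟩
  have hm0 : 0 ≤ m := hm ▸ integral_nonneg_of_ae (hnonneg 0)
  have hb : δ * ∫ ω, τ 0 ω ∂μ < 1 := by rw [← hm]; nlinarith [mul_nonneg hδ.le hm0]
  obtain ⟨C, hC, h⟩ := exists_eventually_measureReal_lt_sum_le hindep hid (hnonneg 0) hint
    (fun t => ENNReal.toReal_pos (htailpos t).ne' (measure_ne_top _ _)) hθ hRV hδ.le hb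
    (by linarith : 0 < 1 - γ * δ * m)
  refine ⟨C, hC, h.mono fun t ht x hx => ?_⟩
  rw [← ofReal_measureReal, ← ofReal_measureReal, ← ENNReal.ofReal_mul (by positivity [hx.1])]
  exact ENNReal.ofReal_le_ofReal (ht x hx)
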